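/- Let χ : ℝ → ℂ belong to the Carleman class C_M{ℝ}, let r ∈ ℕ with r ≥ 1, and suppose y ∈ C_M{ℝ} and δ : ℝ → [0,∞) satisfy |y(s) - y(s+1) - χ(s)| ≤ δ(s) for all s ∈ ℝ, where δ is of class C^{2r+1} on ℝ. Then there exists z ∈ C_M{ℝ} with z(s) - z(s+1) = χ(s) for all s ∈ ℝ and, for all s ∈ ℝ, |y(s) - z(s)| ≤ (⌈(b-s)⁺⌉ + ⌈(s-a)⁺⌉)·sup_{u ∈ I_s} δ(u) + Σ_{j=1}^{r} (B_j/(2j)!)·(⌈(b-s)⁺⌉ + ⌈(s-a)⁺⌉)·sup_{u ∈ I_s} |δ^{(2j)}(u)| + ((r + 1/2)·B_r/(2r+1)!)·(⌈(b-s)⁺⌉ + ⌈(s-a)⁺⌉ - 1)·sup_{u ∈ I_s} |δ^{(2r+1)}(u)|, where I_s denotes the interval [s - ⌈(s-a)⁺⌉, s + ⌈(b-s)⁺⌉ - 1], x⁺ := max(x,0), and ⌈·⌉ is the ceiling function. -/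

import Mathlib

open Filter Function

/-- The Carleman class `C_M{ℝ}` of smooth functions `f : ℝ → ℂ` whose derivatives satisfy
`‖f⁽ⁿ⁾‖ ≤ C_K ρ_K^n M_n` on every compact interval `K`. -/
noncomputable def CarlemanClass (M : ℕ → ℝ) : Set (ℝ → ℂ) :=
  {f | ContDiff ℝ (⊤ : ℕ∞) f ∧ ∀ α β : ℝ, ∃ C ρ : ℝ, 0 < C ∧ 0 < ρ ∧
    ∀ n : ℕ, ∀ x ∈ Set.Icc α β, ‖iteratedDeriv n f x‖ ≤ C * ρ ^ n * M n}

/-- Nonquasianalyticity of the Carleman class `C_M{ℝ}`. -/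
def Nonquasianalytic (M : ℕ → ℝ) : Prop :=
  ∃ f₀ ∈ CarlemanClass M, f₀ ≠ 0 ∧ ∃ x₀ : ℝ, ∀ n : ℕ, iteratedDeriv n f₀ x₀ = 0

/-- The standing assumptions on the weight sequence `M` : positivity, nonquasianalyticity
of `C_M{ℝ}`, almost-increasingness of `((M_n/n!)^{1/n})_{n ≥ 1}`, `1 = M_0 ≤ M_1`,
logarithmic convexity of `(M_n/n!)`, `sup_{n ≥ 1} (M_{n+1}/((n+1) M_n))^{1/n} < ∞` and
`liminf (M_n/n!)^{1/n} > 0`. -/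
def StandingAssumptions (M : ℕ → ℝ) : Prop :=
  (∀ n, 0 < M n) ∧ Nonquasianalytic M ∧
  (∃ C : ℝ, 0 < C ∧ ∀ p q : ℕ, 1 ≤ p → p ≤ q →
    (M p / (Nat.factorial p : ℝ)) ^ ((1 : ℝ) / (p : ℝ)) ≤
      C * (M q / (Nat.factorial q : ℝ)) ^ ((1 : ℝ) / (q : ℝ))) ∧
  (M 0 = 1 ∧ M 0 ≤ M 1) ∧
  (∀ n : ℕ, (M (n + 1) / (Nat.factorial (n + 1) : ℝ)) ^ 2 ≤
    (M n / (Nat.factorial n : ℝ)) * (M (n + 2) / (Nat.factorial (n + 2) : ℝ))) ∧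
  (∃ B : ℝ, ∀ n : ℕ, 1 ≤ n →
    (M (n + 1) / (((n : ℝ) + 1) * M n)) ^ ((1 : ℝ) / (n : ℝ)) ≤ B) ∧
  (0 < Filter.liminf (fun n : ℕ => (M n / (Nat.factorial n : ℝ)) ^ ((1 : ℝ) / (n : ℝ)))
    Filter.atTop)

/-- The Bernoulli number of order `j` in Dieudonné's convention:
`B_j = |B_{2j}|` where `B_{2j}` is the standard `2j`-th Bernoulli number. -/
noncomputable def Bdieu (j : ℕ) : ℝ := |((bernoulli (2 * j) : ℚ) : ℝ)|


open Set

/-!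
Let `ε = y - y(· + 1) - χ`. Nonquasianalyticity gives a cutoff `φ` in the Carleman class with
`φ = 1` on `(-∞, a]`, `φ = 0` on `[b, ∞)` and `0 ≤ φ ≤ 1`: the squared modulus of a nonzero
flat function, cut off at its flat point, gives a one-sided function; the product of two
rescaled copies is a bump supported in `[a, b]`, and `φ` is one minus its normalized primitive.
The class is an algebra because `M_n / n!` is log-convex, so it contains `φ ε` and `(1 - φ) ε`,
which vanish on `[b, ∞)` and on `(-∞, a]` respectively. Hence
`E s = ∑ₖ (φ ε) (s + k) - ∑ₖ ((1 - φ) ε) (s - (k + 1))` is locally a finite sum of translates,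
lies in the class, and satisfies `E s - E (s + 1) = ε s`. Then `z = y - E` solves the equation,
and `y s - z s = E s` is a sum of `⌈(b - s)⁺⌉ + ⌈(s - a)⁺⌉` values of `ε` on `I_s`, each bounded
by `δ`; the remaining terms of the bound are nonnegative.
-/

theorem mul_le_mul_add_of_logConvex {m : ℕ → ℝ} (hpos : ∀ n, 0 < m n)
    (hconv : ∀ n, m (n + 1) ^ 2 ≤ m n * m (n + 2)) (j k : ℕ) :
    m j * m k ≤ m 0 * m (j + k) := by
  have hratio : Monotone fun n => m (n + 1) / m n := by
    refine monotone_nat_of_le_succ fun n => ?_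
    rw [div_le_div_iff₀ (hpos n) (hpos (n + 1))]
    nlinarith [hconv n]
  induction j with
  | zero => simp
  | succ j ih =>
    have hj : m (j + 1) / m j ≤ m (j + k + 1) / m (j + k) := hratio (Nat.le_add_right j k)
    calc m (j + 1) * m k = m (j + 1) / m j * (m j * m k) := by
          field_simp [(hpos j).ne']
      _ ≤ m (j + k + 1) / m (j + k) * (m 0 * m (j + k)) :=
          mul_le_mul hj ih (mul_pos (hpos j) (hpos k)).le (div_pos (hpos _) (hpos _)).le
      _ = m 0 * m (j + 1 + k) := by
          rw [Nat.add_right_comm]; field_simp [(hpos (j + k)).ne']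

theorem StandingAssumptions.choose_mul_le {M : ℕ → ℝ} (hM : StandingAssumptions M)
    (i n : ℕ) (h : i ≤ n) : (n.choose i : ℝ) * M i * M (n - i) ≤ M n := by
  obtain ⟨hpos, -, -, ⟨h0, -⟩, hconv, -, -⟩ := hM
  have hm := mul_le_mul_add_of_logConvex (m := fun n => M n / n.factorial)
    (fun n => div_pos (hpos n) (by positivity)) hconv i (n - i)
  simp only [h0, Nat.factorial_zero, Nat.cast_one, div_one, one_mul,
    Nat.add_sub_cancel' h] at hm
  have hfact : (n.choose i : ℝ) * i.factorial * (n - i).factorial = n.factorial := by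
    exact_mod_cast Nat.choose_mul_factorial_mul_factorial h
  rw [div_mul_div_comm, div_le_div_iff₀ (by positivity) (by positivity), ← hfact] at hm
  have : (0 : ℝ) < i.factorial * (n - i).factorial := by positivity
  nlinarith

theorem StandingAssumptions.mul_le_succ {M : ℕ → ℝ} (hM : StandingAssumptions M) (n : ℕ) :
    M 1 * M n ≤ M (n + 1) := by
  have h := hM.choose_mul_le 1 (n + 1) (Nat.le_add_left 1 n)
  rw [Nat.choose_one_right, Nat.add_sub_cancel] at h
  have := mul_pos (hM.1 1) (hM.1 n)
  push_cast at h
  nlinarith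

open scoped ContDiff

theorem ContinuousLinearMap.iteratedDeriv_comp_left {𝕜 E F : Type*} [NontriviallyNormedField 𝕜]
    [NormedAddCommGroup E] [NormedSpace 𝕜 E] [NormedAddCommGroup F] [NormedSpace 𝕜 F]
    (T : E →L[𝕜] F) {f : 𝕜 → E} {n : ℕ} {x : 𝕜} (hf : ContDiffAt 𝕜 n f x) :
    iteratedDeriv n (T ∘ f) x = T (iteratedDeriv n f x) := by
  simp only [iteratedDeriv_eq_iteratedFDeriv, T.iteratedFDeriv_comp_left hf le_rfl]
  rfl

section CarlemanBound

variable {E F : Type*} [NormedAddCommGroup E] [NormedSpace ℝ E] [NormedAddCommGroup F]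
  [NormedSpace ℝ F] {M : ℕ → ℝ} {s t : Set ℝ} {f g : ℝ → E}

def CarlemanBoundOn (M : ℕ → ℝ) (s : Set ℝ) (f : ℝ → E) : Prop :=
  ∃ C ρ : ℝ, 0 < C ∧ 0 < ρ ∧ ∀ n : ℕ, ∀ x ∈ s, ‖iteratedDeriv n f x‖ ≤ C * ρ ^ n * M n

theorem carlemanBoundOn_of_forall_le (hM : ∀ n, 0 ≤ M n) {C ρ : ℝ} (hρ : 0 ≤ ρ)
    (h : ∀ n : ℕ, ∀ x ∈ s, ‖iteratedDeriv n f x‖ ≤ C * ρ ^ n * M n) :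
    CarlemanBoundOn M s f := by
  refine ⟨max C 1, max ρ 1, by positivity, by positivity, fun n x hx => (h n x hx).trans ?_⟩
  have := hM n
  gcongr
  · exact le_max_left _ _
  · exact le_max_left _ _

theorem CarlemanBoundOn.of_norm_le {g : ℝ → F} (h : CarlemanBoundOn M s g)
    (hfg : ∀ n : ℕ, ∀ x ∈ s, ‖iteratedDeriv n f x‖ ≤ ‖iteratedDeriv n g x‖) :
    CarlemanBoundOn M s f :=
  let ⟨C, ρ, hC, hρ, hb⟩ := h
  ⟨C, ρ, hC, hρ, fun n x hx => (hfg n x hx).trans (hb n x hx)⟩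

theorem CarlemanBoundOn.congr {u : Set ℝ} (h : CarlemanBoundOn M s g) (hfg : EqOn f g u)
    (hu : IsOpen u) (hsu : s ⊆ u) : CarlemanBoundOn M s f :=
  h.of_norm_le fun n _ hx => (congrArg norm (hfg.iteratedDeriv_of_isOpen hu n (hsu hx))).le

theorem CarlemanBoundOn.add (hM : ∀ n, 0 ≤ M n) (hf : ContDiff ℝ ∞ f) (hg : ContDiff ℝ ∞ g)
    (h₁ : CarlemanBoundOn M s f) (h₂ : CarlemanBoundOn M s g) : CarlemanBoundOn M s (f + g) := by
  obtain ⟨C₁, ρ₁, hC₁, hρ₁, hb₁⟩ := h₁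
  obtain ⟨C₂, ρ₂, hC₂, hρ₂, hb₂⟩ := h₂
  refine carlemanBoundOn_of_forall_le hM (C := C₁ + C₂) (ρ := max ρ₁ ρ₂) (by positivity)
    fun n x hx => ?_
  rw [iteratedDeriv_add (contDiff_infty.1 hf n).contDiffAt (contDiff_infty.1 hg n).contDiffAt]
  have := hM n
  calc _ ≤ ‖iteratedDeriv n f x‖ + ‖iteratedDeriv n g x‖ := norm_add_le _ _
    _ ≤ C₁ * max ρ₁ ρ₂ ^ n * M n + C₂ * max ρ₁ ρ₂ ^ n * M n := by
        gcongr ?_ + ?_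
        · exact (hb₁ n x hx).trans (by gcongr; exact le_max_left _ _)
        · exact (hb₂ n x hx).trans (by gcongr; exact le_max_right _ _)
    _ = _ := by ring

theorem CarlemanBoundOn.neg (h : CarlemanBoundOn M s f) : CarlemanBoundOn M s (-f) :=
  h.of_norm_le fun n x _ => by rw [iteratedDeriv_neg, norm_neg]

theorem CarlemanBoundOn.sub (hM : ∀ n, 0 ≤ M n) (hf : ContDiff ℝ ∞ f) (hg : ContDiff ℝ ∞ g)
    (h₁ : CarlemanBoundOn M s f) (h₂ : CarlemanBoundOn M s g) : CarlemanBoundOn M s (f - g) :=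
  sub_eq_add_neg f g ▸ h₁.add hM hf hg.neg h₂.neg

theorem CarlemanBoundOn.clm_comp (hM : ∀ n, 0 ≤ M n) (T : E →L[ℝ] F) (hf : ContDiff ℝ ∞ f)
    (h : CarlemanBoundOn M s f) : CarlemanBoundOn M s (T ∘ f) := by
  obtain ⟨C, ρ, -, hρ, hb⟩ := h
  refine carlemanBoundOn_of_forall_le hM (C := ‖T‖ * C) hρ.le fun n x hx => ?_
  rw [T.iteratedDeriv_comp_left (contDiff_infty.1 hf n).contDiffAt, mul_assoc, mul_assoc]
  exact T.le_opNorm_of_le (by simpa only [mul_assoc] using hb n x hx)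

theorem CarlemanBoundOn.const_smul (hM : ∀ n, 0 ≤ M n) (c : ℝ) (h : CarlemanBoundOn M s f) :
    CarlemanBoundOn M s (c • f) := by
  obtain ⟨C, ρ, -, hρ, hb⟩ := h
  refine carlemanBoundOn_of_forall_le hM (C := |c| * C) hρ.le fun n x hx => ?_
  rw [iteratedDeriv_const_smul_field, norm_smul, Real.norm_eq_abs, mul_assoc, mul_assoc]
  exact mul_le_mul_of_nonneg_left (by simpa only [mul_assoc] using hb n x hx) (abs_nonneg c)

theorem CarlemanBoundOn.comp_add_const (c : ℝ) (h : CarlemanBoundOn M t f)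
    (hst : ∀ x ∈ s, x + c ∈ t) : CarlemanBoundOn M s (fun x => f (x + c)) :=
  let ⟨C, ρ, hC, hρ, hb⟩ := h
  ⟨C, ρ, hC, hρ, fun n x hx => by
    rw [iteratedDeriv_comp_add_const]; exact hb n _ (hst x hx)⟩

theorem CarlemanBoundOn.comp_const_mul (hM : ∀ n, 0 ≤ M n) (hf : ContDiff ℝ ∞ f) (c : ℝ)
    (h : CarlemanBoundOn M t f) (hst : ∀ x ∈ s, c * x ∈ t) :
    CarlemanBoundOn M s (fun x => f (c * x)) := by
  obtain ⟨C, ρ, -, hρ, hb⟩ := h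
  refine carlemanBoundOn_of_forall_le hM (C := C) (ρ := |c| * ρ) (by positivity) fun n x hx => ?_
  rw [iteratedDeriv_comp_const_smul (contDiff_infty.1 hf n), norm_smul, norm_pow,
    Real.norm_eq_abs, mul_pow]
  calc |c| ^ n * ‖iteratedDeriv n f (c * x)‖ ≤ |c| ^ n * (C * ρ ^ n * M n) := by
        gcongr; exact hb n _ (hst x hx)
    _ = _ := by ring

theorem CarlemanBoundOn.mul {A : Type*} [NormedRing A] [NormedAlgebra ℝ A] (hM : ∀ n, 0 ≤ M n)
    (hchoose : ∀ i n : ℕ, i ≤ n → (n.choose i : ℝ) * M i * M (n - i) ≤ M n) {f g : ℝ → A}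
    (hf : ContDiff ℝ ∞ f) (hg : ContDiff ℝ ∞ g) (h₁ : CarlemanBoundOn M s f)
    (h₂ : CarlemanBoundOn M s g) : CarlemanBoundOn M s (fun x => f x * g x) := by
  obtain ⟨C₁, ρ₁, hC₁, hρ₁, hb₁⟩ := h₁
  obtain ⟨C₂, ρ₂, hC₂, hρ₂, hb₂⟩ := h₂
  refine carlemanBoundOn_of_forall_le hM (C := C₁ * C₂) (ρ := ρ₁ + ρ₂) (by positivity)
    fun n x hx => ?_
  have hterm : ∀ i ∈ Finset.range (n + 1), (n.choose i : ℝ) * ‖iteratedFDeriv ℝ i f x‖ *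
      ‖iteratedFDeriv ℝ (n - i) g x‖ ≤ C₁ * C₂ * M n * (n.choose i * ρ₁ ^ i * ρ₂ ^ (n - i)) := by
    intro i hi
    have hin : i ≤ n := Nat.lt_succ_iff.mp (Finset.mem_range.mp hi)
    have hone : (1 : ℝ) ≤ n.choose i := by exact_mod_cast Nat.choose_pos hin
    simp only [norm_iteratedFDeriv_eq_norm_iteratedDeriv]
    have := hM i
    calc (n.choose i : ℝ) * ‖iteratedDeriv i f x‖ * ‖iteratedDeriv (n - i) g x‖
        ≤ n.choose i * (C₁ * ρ₁ ^ i * M i) * (C₂ * ρ₂ ^ (n - i) * M (n - i)) := by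
          gcongr
          exacts [hb₁ i x hx, hb₂ (n - i) x hx]
      _ = C₁ * C₂ * (ρ₁ ^ i * ρ₂ ^ (n - i)) * (n.choose i * M i * M (n - i)) := by ring
      _ ≤ C₁ * C₂ * (ρ₁ ^ i * ρ₂ ^ (n - i)) * (n.choose i * M n) := by
          exact mul_le_mul_of_nonneg_left
            ((hchoose i n hin).trans (le_mul_of_one_le_left (hM n) hone)) (by positivity)
      _ = _ := by ring
  rw [← norm_iteratedFDeriv_eq_norm_iteratedDeriv]
  calc _ ≤ _ := norm_iteratedFDeriv_mul_le hf hg x (by exact_mod_cast le_top)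
    _ ≤ _ := Finset.sum_le_sum hterm
    _ = C₁ * C₂ * (ρ₁ + ρ₂) ^ n * M n := by
        rw [← Finset.mul_sum, add_pow]
        simp only [mul_comm, mul_left_comm, mul_assoc, Finset.mul_sum]

theorem CarlemanBoundOn.of_deriv (hM : ∀ n, 0 < M n) (hM₁ : ∀ n, M 1 * M n ≤ M (n + 1))
    {K : ℝ} (hf : ∀ x ∈ s, ‖f x‖ ≤ K) (h : CarlemanBoundOn M s (deriv f)) :
    CarlemanBoundOn M s f := by
  obtain ⟨C, ρ, hC, hρ, hb⟩ := h
  refine carlemanBoundOn_of_forall_le (fun n => (hM n).le) (C := max (K / M 0) (C / (ρ * M 1)))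
    hρ.le fun n x hx => ?_
  cases n with
  | zero =>
    rw [iteratedDeriv_zero, pow_zero, mul_one]
    calc ‖f x‖ ≤ K / M 0 * M 0 := by rw [div_mul_cancel₀ _ (hM 0).ne']; exact hf x hx
      _ ≤ _ := by gcongr; exacts [(hM 0).le, le_max_left _ _]
  | succ n =>
    rw [iteratedDeriv_succ']
    have := hM 1
    calc _ ≤ C * ρ ^ n * M n := hb n x hx
      _ = C / (ρ * M 1) * ρ ^ (n + 1) * (M 1 * M n) := by field_simp; ring
      _ ≤ max (K / M 0) (C / (ρ * M 1)) * ρ ^ (n + 1) * M (n + 1) := by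
          refine mul_le_mul (by gcongr; exact le_max_right _ _) (hM₁ n)
            (mul_pos (hM 1) (hM n)).le (by positivity)

end CarlemanBound

section IsCarleman

variable {E F : Type*} [NormedAddCommGroup E] [NormedSpace ℝ E] [NormedAddCommGroup F]
  [NormedSpace ℝ F] {M : ℕ → ℝ} {f g : ℝ → E}

def IsCarleman (M : ℕ → ℝ) (f : ℝ → E) : Prop :=
  ContDiff ℝ ∞ f ∧ ∀ α β : ℝ, CarlemanBoundOn M (Icc α β) f

theorem mem_carlemanClass_iff {f : ℝ → ℂ} : f ∈ CarlemanClass M ↔ IsCarleman M f := Iff.rfl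

theorem IsCarleman.add (hM : ∀ n, 0 ≤ M n) (hf : IsCarleman M f) (hg : IsCarleman M g) :
    IsCarleman M (f + g) :=
  ⟨hf.1.add hg.1, fun α β => (hf.2 α β).add hM hf.1 hg.1 (hg.2 α β)⟩

theorem IsCarleman.sub (hM : ∀ n, 0 ≤ M n) (hf : IsCarleman M f) (hg : IsCarleman M g) :
    IsCarleman M (f - g) :=
  ⟨hf.1.sub hg.1, fun α β => (hf.2 α β).sub hM hf.1 hg.1 (hg.2 α β)⟩

theorem IsCarleman.mul {A : Type*} [NormedRing A] [NormedAlgebra ℝ A] (hM : ∀ n, 0 ≤ M n)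
    (hchoose : ∀ i n : ℕ, i ≤ n → (n.choose i : ℝ) * M i * M (n - i) ≤ M n) {f g : ℝ → A}
    (hf : IsCarleman M f) (hg : IsCarleman M g) : IsCarleman M (fun x => f x * g x) :=
  ⟨hf.1.mul hg.1, fun α β => (hf.2 α β).mul hM hchoose hf.1 hg.1 (hg.2 α β)⟩

theorem IsCarleman.clm_comp (hM : ∀ n, 0 ≤ M n) (T : E →L[ℝ] F) (hf : IsCarleman M f) :
    IsCarleman M (T ∘ f) :=
  ⟨T.contDiff.comp hf.1, fun α β => (hf.2 α β).clm_comp hM T hf.1⟩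

theorem IsCarleman.comp_add_const (hf : IsCarleman M f) (c : ℝ) :
    IsCarleman M (fun x => f (x + c)) :=
  ⟨hf.1.comp (contDiff_id.add contDiff_const), fun α β =>
    (hf.2 (α + c) (β + c)).comp_add_const c fun _ hx => ⟨by linarith [hx.1], by linarith [hx.2]⟩⟩

theorem IsCarleman.comp_const_mul (hM : ∀ n, 0 ≤ M n) (hf : IsCarleman M f) (c : ℝ) :
    IsCarleman M (fun x => f (c * x)) := by
  refine ⟨hf.1.comp (contDiff_const.mul contDiff_id), fun α β => ?_⟩
  set R := |c| * (|α| + |β|)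
  refine (hf.2 (-R) R).comp_const_mul hM hf.1 c fun x hx => abs_le.mp ?_
  rw [abs_mul]
  exact mul_le_mul_of_nonneg_left ((abs_le_max_abs_abs hx.1 hx.2).trans
    (max_le_add_of_nonneg (abs_nonneg _) (abs_nonneg _))) (abs_nonneg c)

theorem IsCarleman.comp_neg (hM : ∀ n, 0 ≤ M n) (hf : IsCarleman M f) :
    IsCarleman M (fun x => f (-x)) := by
  simpa using hf.comp_const_mul hM (-1)

theorem IsCarleman.const (hM : ∀ n, 0 < M n) (c : E) : IsCarleman M (fun _ => c) := by
  refine ⟨contDiff_const, fun _ _ => ⟨(‖c‖ + 1) / M 0, 1, by have := hM 0; positivity, one_pos,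
    fun n _ _ => ?_⟩⟩
  rw [iteratedDeriv_const]
  split_ifs with hn
  · subst hn
    rw [pow_zero, mul_one, div_mul_cancel₀ _ (hM 0).ne']
    linarith
  · rw [norm_zero]
    have := hM 0; have := hM n
    positivity

theorem IsCarleman.sum (hM : ∀ n, 0 < M n) {ι : Type*} (I : Finset ι) {f : ι → ℝ → E}
    (h : ∀ i ∈ I, IsCarleman M (f i)) : IsCarleman M (fun x => ∑ i ∈ I, f i x) := by
  classical
  induction I using Finset.induction_on with
  | empty => simpa using IsCarleman.const hM (0 : E)
  | insert i I hi ih =>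
    simp only [Finset.sum_insert hi]
    exact (h i (Finset.mem_insert_self i I)).add (fun n => (hM n).le)
      (ih fun j hj => h j (Finset.mem_insert_of_mem hj))

theorem IsCarleman.of_locally
    (h : ∀ α β : ℝ, ∃ g : ℝ → E, IsCarleman M g ∧ EqOn f g (Ioo (α - 1) (β + 1))) :
    IsCarleman M f := by
  refine ⟨contDiff_iff_contDiffAt.2 fun x => ?_, fun α β => ?_⟩
  · obtain ⟨g, hg, hfg⟩ := h x x
    exact hg.1.contDiffAt.congr_of_eventuallyEq
      (eventually_of_mem (Ioo_mem_nhds (by linarith) (by linarith)) hfg)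
  · obtain ⟨g, hg, hfg⟩ := h α β
    exact (hg.2 α β).congr hfg isOpen_Ioo fun x hx => ⟨by linarith [hx.1], by linarith [hx.2]⟩

end IsCarleman

theorem continuous_indicator_Ici {X : Type*} [TopologicalSpace X] [Zero X] {f : ℝ → X}
    {t₀ : ℝ} (hf : Continuous f) (h₀ : f t₀ = 0) : Continuous ((Ici t₀).indicator f) := by
  have : (Ici t₀).indicator f = fun y => f (max y t₀) := by
    ext y
    rcases le_or_gt t₀ y with hy | hy
    · rw [indicator_of_mem (mem_Ici.2 hy), max_eq_left hy]
    · rw [indicator_of_notMem (notMem_Ici.2 hy), max_eq_right hy.le, h₀]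
  rw [this]
  fun_prop

section Indicator

variable {E : Type*} [NormedAddCommGroup E] [NormedSpace ℝ E] {M : ℕ → ℝ} {f f' g : ℝ → E}
  {t₀ : ℝ}

theorem hasDerivAt_indicator_Ici (hf : ∀ y, HasDerivAt f (f' y) y) (hf' : Continuous f')
    (h₀ : f t₀ = 0) (h₀' : f' t₀ = 0) (x : ℝ) :
    HasDerivAt ((Ici t₀).indicator f) ((Ici t₀).indicator f' x) x := by
  refine hasDerivAt_of_hasDerivAt_of_ne' (x := t₀) (fun y (hy : y ≠ t₀) => ?_)
    (continuous_indicator_Ici (continuous_iff_continuousAt.2 fun y => (hf y).continuousAt) h₀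
      ).continuousAt (continuous_indicator_Ici hf' h₀').continuousAt x
  rcases hy.lt_or_gt with hy | hy
  · rw [indicator_of_notMem (notMem_Ici.2 hy)]
    refine (hasDerivAt_const y (0 : E)).congr_of_eventuallyEq ?_
    filter_upwards [Iio_mem_nhds hy] with z hz using indicator_of_notMem (notMem_Ici.2 hz) f
  · rw [indicator_of_mem (mem_Ici.2 hy.le)]
    refine (hf y).congr_of_eventuallyEq ?_
    filter_upwards [Ioi_mem_nhds hy] with z hz using indicator_of_mem (mem_Ici.2 hz.le) f

theorem hasDerivAt_indicator_Ici_iteratedDeriv (hg : ContDiff ℝ ∞ g)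
    (hflat : ∀ n, iteratedDeriv n g t₀ = 0) (n : ℕ) (x : ℝ) :
    HasDerivAt ((Ici t₀).indicator (iteratedDeriv n g))
      ((Ici t₀).indicator (iteratedDeriv (n + 1) g) x) x := by
  have hg' := contDiff_infty.1 hg (n + 1)
  refine hasDerivAt_indicator_Ici (fun y => ?_) (hg'.continuous_iteratedDeriv' (n + 1))
    (hflat n) (hflat (n + 1)) x
  rw [iteratedDeriv_succ]
  exact (hg'.differentiable_iteratedDeriv' n y).hasDerivAt

theorem iteratedDeriv_indicator_Ici (hg : ContDiff ℝ ∞ g)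
    (hflat : ∀ n, iteratedDeriv n g t₀ = 0) (n : ℕ) :
    iteratedDeriv n ((Ici t₀).indicator g) = (Ici t₀).indicator (iteratedDeriv n g) := by
  induction n with
  | zero => simp
  | succ n ih =>
    ext x
    rw [iteratedDeriv_succ, ih, (hasDerivAt_indicator_Ici_iteratedDeriv hg hflat n x).deriv]

theorem IsCarleman.indicator_Ici (hg : IsCarleman M g) (hflat : ∀ n, iteratedDeriv n g t₀ = 0) :
    IsCarleman M ((Ici t₀).indicator g) := by
  have hd := hasDerivAt_indicator_Ici_iteratedDeriv hg.1 hflat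
  simp only [← iteratedDeriv_indicator_Ici hg.1 hflat] at hd
  refine ⟨contDiff_iff_iteratedDeriv.2 ⟨fun m _ => ?_, fun m _ x => (hd m x).differentiableAt⟩,
    fun α β => (hg.2 α β).of_norm_le fun n x _ => ?_⟩
  · exact continuous_iff_continuousAt.2 fun x => (hd m x).continuousAt
  · rw [iteratedDeriv_indicator_Ici hg.1 hflat]
    exact norm_indicator_le_norm_self _ _

end Indicator

theorem iteratedDeriv_mul_eq_zero_of_flat {A : Type*} [NormedRing A] [NormedAlgebra ℝ A]
    {f g : ℝ → A} (hf : ContDiff ℝ ∞ f) (hg : ContDiff ℝ ∞ g) {x₀ : ℝ}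
    (hflat : ∀ n, iteratedDeriv n f x₀ = 0) (n : ℕ) :
    iteratedDeriv n (fun x => f x * g x) x₀ = 0 := by
  rw [iteratedDeriv_fun_mul (contDiff_infty.1 hf n).contDiffAt (contDiff_infty.1 hg n).contDiffAt]
  simp [hflat]

section Cutoff

variable {M : ℕ → ℝ}

theorem Nonquasianalytic.exists_flat_nonneg (hM : ∀ n, 0 ≤ M n)
    (hchoose : ∀ i n : ℕ, i ≤ n → (n.choose i : ℝ) * M i * M (n - i) ≤ M n)
    (hnq : Nonquasianalytic M) :
    ∃ h : ℝ → ℝ, IsCarleman M h ∧ (∀ x, 0 ≤ h x) ∧ (∀ n, iteratedDeriv n h 0 = 0) ∧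
      ∃ d, 0 < d ∧ 0 < h d := by
  obtain ⟨f₀, hf₀, hne, x₀, hflat⟩ := hnq
  obtain ⟨c, hc⟩ : ∃ c, f₀ c ≠ 0 := by
    by_contra! h
    exact hne (funext h)
  have hcx₀ : c ≠ x₀ := by
    rintro rfl
    exact hc (by simpa using hflat 0)
  rw [mem_carlemanClass_iff] at hf₀
  have hf₀' := hf₀.clm_comp hM Complex.conjCLE.toContinuousLinearMap
  -- `|f₀|²`, written as `re (f₀ * conj f₀)` to exhibit it as a product of Carleman functions
  set G : ℝ → ℝ := Complex.reCLM ∘ fun x => f₀ x * (Complex.conjCLE.toContinuousLinearMap ∘ f₀) x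
  have hG : IsCarleman M G := (hf₀.mul hM hchoose hf₀').clm_comp hM _
  have hGval : ∀ x, G x = Complex.normSq (f₀ x) := fun x => by simp [G, Complex.mul_conj]
  have hGflat : ∀ n, iteratedDeriv n G x₀ = 0 := fun n => by
    rw [Complex.reCLM.iteratedDeriv_comp_left
      (contDiff_infty.1 (hf₀.1.mul hf₀'.1) n).contDiffAt,
      iteratedDeriv_mul_eq_zero_of_flat hf₀.1 hf₀'.1 hflat, map_zero]
  set σ : ℝ := ↑(SignType.sign (c - x₀))
  refine ⟨fun t => G (σ * t + x₀), (hG.comp_add_const x₀).comp_const_mul hM σ,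
    fun t => by simp [hGval, Complex.normSq_nonneg], fun n => ?_,
    |c - x₀|, abs_pos.2 (sub_ne_zero.2 hcx₀), ?_⟩
  · show iteratedDeriv n (fun t => (fun y => G (y + x₀)) (σ * t)) 0 = 0
    rw [iteratedDeriv_comp_const_smul (contDiff_infty.1 (hG.comp_add_const x₀).1 n),
      iteratedDeriv_comp_add_const]
    simp only [mul_zero, zero_add, hGflat, smul_zero]
  · show 0 < G (σ * |c - x₀| + x₀)
    rw [show σ * |c - x₀| + x₀ = c by simp [σ], hGval]
    exact Complex.normSq_pos.2 hc

theorem exists_carleman_bump (hM : ∀ n, 0 ≤ M n)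
    (hchoose : ∀ i n : ℕ, i ≤ n → (n.choose i : ℝ) * M i * M (n - i) ≤ M n)
    (hnq : Nonquasianalytic M) {a b : ℝ} (hab : a < b) :
    ∃ q : ℝ → ℝ, IsCarleman M q ∧ (∀ x, 0 ≤ q x) ∧ (∀ x ∉ Ioo a b, q x = 0) ∧
      0 < q ((a + b) / 2) := by
  obtain ⟨h, hh, hh0, hflat, d, hd, hhd⟩ := hnq.exists_flat_nonneg hM hchoose
  set u := (Ici (0 : ℝ)).indicator h
  have hu : IsCarleman M u := hh.indicator_Ici hflat
  have hu0 : ∀ y ≤ 0, u y = 0 := fun y hy => by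
    rcases hy.lt_or_eq with hy | rfl
    · exact indicator_of_notMem (notMem_Ici.2 hy) h
    · simpa [u] using hflat 0
  have hu_nonneg : ∀ y, 0 ≤ u y := indicator_nonneg fun y _ => hh0 y
  obtain ⟨k, hk, hkba⟩ : ∃ k : ℝ, 0 < k ∧ k * (b - a) = 2 * d :=
    ⟨2 * d / (b - a), div_pos (by positivity) (sub_pos.2 hab), by field_simp [(sub_pos.2 hab).ne']⟩
  refine ⟨fun x => u (k * x + -(k * a)) * u (-k * x + k * b),
    ((hu.comp_add_const _).comp_const_mul hM k).mul hM hchoose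
      ((hu.comp_add_const _).comp_const_mul hM (-k)),
    fun x => mul_nonneg (hu_nonneg _) (hu_nonneg _), fun x hx => ?_, ?_⟩
  · show u _ * u _ = 0
    rcases not_and_or.1 hx with hx | hx
    · rw [hu0 _ (by nlinarith [not_lt.1 hx]), zero_mul]
    · rw [hu0 (-k * x + k * b) (by nlinarith [not_lt.1 hx]), mul_zero]
  · have h₁ : k * ((a + b) / 2) + -(k * a) = d := by linear_combination hkba / 2
    have h₂ : -k * ((a + b) / 2) + k * b = d := by linear_combination hkba / 2
    have hud : 0 < u d := by
      show 0 < (Ici 0).indicator h d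
      rwa [indicator_of_mem (mem_Ici.2 hd.le)]
    show 0 < u _ * u _
    rw [h₁, h₂]
    positivity

theorem intervalIntegral_eq_zero_of_eqOn_zero {f : ℝ → ℝ} {a b : ℝ} (h : EqOn f 0 (uIcc a b)) :
    ∫ x in a..b, f x = 0 := by
  simp [intervalIntegral.integral_congr h]

theorem intervalIntegral_pos_of_pos_at {f : ℝ → ℝ} {a b c : ℝ} (hf : Continuous f)
    (hf0 : ∀ x, 0 ≤ f x) (hc : c ∈ Ioo a b) (hfc : 0 < f c) : 0 < ∫ x in a..b, f x := by
  refine (intervalIntegral.integral_pos_iff_support_of_nonneg_ae (Eventually.of_forall hf0)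
    (hf.intervalIntegrable _ _)).2 ⟨hc.1.trans hc.2, ?_⟩
  exact ((hf.isOpen_support.inter isOpen_Ioo).measure_pos _ ⟨c, hfc.ne', hc⟩).trans_le
    (MeasureTheory.measure_mono (inter_subset_inter_right _ Ioo_subset_Ioc_self))

theorem exists_carleman_cutoff (hM : StandingAssumptions M) {a b : ℝ} (hab : a < b) :
    ∃ φ : ℝ → ℝ, IsCarleman M φ ∧ (∀ x ≤ a, φ x = 1) ∧ (∀ x, b ≤ x → φ x = 0) ∧
      ∀ x, φ x ∈ Icc 0 1 := by
  have hpos := hM.1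
  obtain ⟨q, hq, hq0, hqab, hqmid⟩ :=
    exists_carleman_bump (fun n => (hpos n).le) hM.choose_mul_le hM.2.1 hab
  have hqc : Continuous q := hq.1.continuous
  set F : ℝ → ℝ := fun x => ∫ t in a..x, q t
  have hF : ∀ x, HasDerivAt F (q x) x := fun x => (hqc.integral_hasStrictDerivAt a x).hasDerivAt
  have hFmono : Monotone F := monotone_of_deriv_nonneg (fun x => (hF x).differentiableAt)
    fun x => (hF x).deriv ▸ hq0 x
  have hFa : ∀ x ≤ a, F x = 0 := fun x hx => intervalIntegral_eq_zero_of_eqOn_zero fun t ht =>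
    hqab t fun h => by rw [uIcc_of_ge hx] at ht; exact not_lt.2 ht.2 h.1
  have hFb : ∀ x, b ≤ x → F x = F b := fun x hx => by
    rw [← sub_eq_zero, intervalIntegral.integral_interval_sub_left (hqc.intervalIntegrable _ _)
      (hqc.intervalIntegrable _ _)]
    exact intervalIntegral_eq_zero_of_eqOn_zero fun t ht =>
      hqab t fun h => by rw [uIcc_of_le hx] at ht; exact not_lt.2 ht.1 h.2
  have hT : 0 < F b := intervalIntegral_pos_of_pos_at hqc hq0 ⟨by linarith, by linarith⟩ hqmid
  have hφ01 : ∀ x, 1 - F x / F b ∈ Icc 0 1 := fun x => by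
    have h₁ : 0 ≤ F x := hFa (min x a) (min_le_right _ _) ▸ hFmono (min_le_left x a)
    have h₂ : F x ≤ F b := hFb (max x b) (le_max_right _ _) ▸ hFmono (le_max_left x b)
    constructor
    · rw [sub_nonneg]; exact div_le_one_of_le₀ h₂ hT.le
    · rw [sub_le_self_iff]; positivity
  have hderiv : deriv (fun x => 1 - F x / F b) = (-(F b)⁻¹) • q := by
    ext x
    rw [(((hF x).div_const (F b)).const_sub 1).deriv]
    simp [div_eq_inv_mul]
  refine ⟨fun x => 1 - F x / F b, ⟨contDiff_infty_iff_deriv.2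
    ⟨fun x => (((hF x).div_const _).const_sub 1).differentiableAt,
      by rw [hderiv]; exact hq.1.const_smul (-(F b)⁻¹)⟩, fun α β => ?_⟩,
    fun x hx => by simp [hFa x hx], fun x hx => by simp [hFb x hx, hT.ne'], hφ01⟩
  refine CarlemanBoundOn.of_deriv hpos hM.mul_le_succ (K := 1) (fun x _ => ?_)
    (hderiv ▸ (hq.2 α β).const_smul (fun n => (hpos n).le) _)
  rw [Real.norm_eq_abs, abs_le]
  constructor <;> linarith [(hφ01 x).1, (hφ01 x).2]

end Cutoff

section TranslateSums

variable {E : Type*} [NormedAddCommGroup E] {g : ℝ → E} {b : ℝ}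

noncomputable def forwardSum (g : ℝ → E) (s : ℝ) : E := ∑' k : ℕ, g (s + k)

theorem forwardSum_eq_sum_range (hg : ∀ x, b ≤ x → g x = 0) {s : ℝ} {K : ℕ} (hK : b - s ≤ K) :
    forwardSum g s = ∑ k ∈ Finset.range K, g (s + k) :=
  tsum_eq_sum fun k hk => hg _ (by
    have : (K : ℝ) ≤ k := by exact_mod_cast not_lt.1 (Finset.mem_range.not.1 hk)
    linarith)

theorem forwardSum_sub_forwardSum_add_one (hg : ∀ x, b ≤ x → g x = 0) (s : ℝ) :
    forwardSum g s - forwardSum g (s + 1) = g s := by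
  have hK := Nat.le_ceil (b - s)
  rw [forwardSum_eq_sum_range hg (K := ⌈b - s⌉₊ + 1) (by push_cast; linarith),
    forwardSum_eq_sum_range hg (s := s + 1) (K := ⌈b - s⌉₊) (by linarith),
    Finset.sum_range_succ']
  simp only [Nat.cast_add, Nat.cast_one, Nat.cast_zero, add_zero, ← add_assoc,
    add_right_comm s _ (1 : ℝ)]
  abel

theorem norm_forwardSum_le (hg : ∀ x, b ≤ x → g x = 0) {s : ℝ} {K : ℕ} (hK : b - s ≤ K) :
    ‖forwardSum g s‖ ≤ ∑ k ∈ Finset.range K, ‖g (s + k)‖ :=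
  forwardSum_eq_sum_range hg hK ▸ norm_sum_le _ _

theorem IsCarleman.forwardSum [NormedSpace ℝ E] {M : ℕ → ℝ} (hM : ∀ n, 0 < M n)
    (hg : IsCarleman M g) (hvan : ∀ x, b ≤ x → g x = 0) : IsCarleman M (forwardSum g) :=
  IsCarleman.of_locally fun α _ =>
    ⟨fun s => ∑ k ∈ Finset.range ⌈b - (α - 1)⌉₊, g (s + k),
      IsCarleman.sum hM _ fun k _ => hg.comp_add_const k,
      fun s hs => forwardSum_eq_sum_range hvan (by linarith [Nat.le_ceil (b - (α - 1)), hs.1])⟩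

-- `backwardSum g s = ∑ₖ g (s - (k + 1))`
noncomputable def backwardSum (g : ℝ → E) (s : ℝ) : E := forwardSum (fun x => g (-x)) (-s + 1)

variable {a : ℝ}

theorem backwardSum_add_one_sub_backwardSum (hg : ∀ x ≤ a, g x = 0) (s : ℝ) :
    backwardSum g (s + 1) - backwardSum g s = g s := by
  have h := forwardSum_sub_forwardSum_add_one (b := -a) (g := fun x => g (-x))
    (fun x hx => hg _ (by linarith)) (-s)
  rw [neg_neg] at h
  rw [backwardSum, backwardSum, show -(s + 1) + 1 = -s by ring, h]

theorem norm_backwardSum_le (hg : ∀ x ≤ a, g x = 0) {s : ℝ} {K : ℕ} (hK : s - a ≤ K) :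
    ‖backwardSum g s‖ ≤ ∑ k ∈ Finset.range K, ‖g (s - (k + 1))‖ := by
  refine (norm_forwardSum_le (b := -a) (fun x hx => hg _ (by linarith)) (by linarith)).trans_eq ?_
  exact Finset.sum_congr rfl fun k _ => by ring_nf

theorem IsCarleman.backwardSum [NormedSpace ℝ E] {M : ℕ → ℝ} (hM : ∀ n, 0 < M n)
    (hg : IsCarleman M g) (hvan : ∀ x ≤ a, g x = 0) : IsCarleman M (backwardSum g) :=
  (((hg.comp_neg fun n => (hM n).le).forwardSum hM (b := -a) fun x hx => hvan _ (by linarith)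
    ).comp_add_const 1).comp_neg fun n => (hM n).le

end TranslateSums

theorem exists_carleman_solution {M : ℕ → ℝ} (hM : StandingAssumptions M) {a b : ℝ} (hab : a < b)
    {ε : ℝ → ℂ} (hε : IsCarleman M ε) :
    ∃ E : ℝ → ℂ, IsCarleman M E ∧ (∀ s, E s - E (s + 1) = ε s) ∧
      ∀ s (K K' : ℕ), b - s ≤ K → s - a ≤ K' →
        ‖E s‖ ≤ ∑ k ∈ Finset.range K, ‖ε (s + k)‖ + ∑ k ∈ Finset.range K', ‖ε (s - (k + 1))‖ := by
  have hpos := hM.1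
  have hM0 : ∀ n, 0 ≤ M n := fun n => (hpos n).le
  obtain ⟨φ, hφ, hφa, hφb, hφ01⟩ := exists_carleman_cutoff hM hab
  have hφc := hφ.clm_comp hM0 Complex.ofRealCLM
  set g₁ : ℝ → ℂ := fun x => (φ x : ℂ) * ε x
  set g₂ : ℝ → ℂ := fun x => (1 - (φ x : ℂ)) * ε x
  have hg₁ : IsCarleman M g₁ := hφc.mul hM0 hM.choose_mul_le hε
  have hg₂ : IsCarleman M g₂ :=
    ((IsCarleman.const hpos 1).sub hM0 hφc).mul hM0 hM.choose_mul_le hε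
  have hv₁ : ∀ x, b ≤ x → g₁ x = 0 := fun x hx => by simp [g₁, hφb x hx]
  have hv₂ : ∀ x ≤ a, g₂ x = 0 := fun x hx => by simp [g₂, hφa x hx]
  have hnorm₁ : ∀ x, ‖g₁ x‖ ≤ ‖ε x‖ := fun x => by
    simp only [g₁, norm_mul, Complex.norm_real, Real.norm_eq_abs, abs_of_nonneg (hφ01 x).1]
    exact mul_le_of_le_one_left (norm_nonneg _) (hφ01 x).2
  have hnorm₂ : ∀ x, ‖g₂ x‖ ≤ ‖ε x‖ := fun x => by
    simp only [g₂, norm_mul]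
    rw [← Complex.ofReal_one, ← Complex.ofReal_sub, Complex.norm_real, Real.norm_eq_abs,
      abs_of_nonneg (sub_nonneg.2 (hφ01 x).2)]
    exact mul_le_of_le_one_left (norm_nonneg _) (by linarith [(hφ01 x).1])
  refine ⟨forwardSum g₁ - backwardSum g₂,
    (hg₁.forwardSum hpos hv₁).sub hM0 (hg₂.backwardSum hpos hv₂), fun s => ?_,
    fun s K K' hK hK' => ?_⟩
  · have h₁ := forwardSum_sub_forwardSum_add_one hv₁ s
    have h₂ := backwardSum_add_one_sub_backwardSum hv₂ s
    calc _ = (forwardSum g₁ s - forwardSum g₁ (s + 1)) +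
          (backwardSum g₂ (s + 1) - backwardSum g₂ s) := by simp only [Pi.sub_apply]; ring
      _ = ε s := by rw [h₁, h₂]; simp only [g₁, g₂]; ring
  · exact (norm_sub_le _ _).trans (add_le_add
      ((norm_forwardSum_le hv₁ hK).trans (Finset.sum_le_sum fun k _ => hnorm₁ _))
      ((norm_backwardSum_le hv₂ hK').trans (Finset.sum_le_sum fun k _ => hnorm₂ _)))

theorem one_le_ceil_max_add_ceil_max {a b : ℝ} (hab : a < b) (s : ℝ) :
    (1 : ℤ) ≤ ⌈max (b - s) 0⌉ + ⌈max (s - a) 0⌉ := by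
  have h₁ := Int.ceil_nonneg (le_max_right (b - s) 0)
  have h₂ := Int.ceil_nonneg (le_max_right (s - a) 0)
  rcases lt_or_ge s b with h | h
  · linarith [Int.one_le_ceil_iff.2 (lt_max_of_lt_left (sub_pos.2 h) : 0 < max (b - s) 0)]
  · linarith [Int.one_le_ceil_iff.2
      (lt_max_of_lt_left (sub_pos.2 (hab.trans_le h)) : 0 < max (s - a) 0)]

theorem norm_le_ceil_mul_sSup {a b : ℝ} {E ε : ℝ → ℂ} {δ : ℝ → ℝ} (hδ : Continuous δ)
    (hεδ : ∀ u, ‖ε u‖ ≤ δ u)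
    (hE : ∀ s (K K' : ℕ), b - s ≤ K → s - a ≤ K' →
      ‖E s‖ ≤ ∑ k ∈ Finset.range K, ‖ε (s + k)‖ + ∑ k ∈ Finset.range K', ‖ε (s - (k + 1))‖)
    (s : ℝ) :
    ‖E s‖ ≤ ((⌈max (b - s) 0⌉ + ⌈max (s - a) 0⌉ : ℤ) : ℝ) *
      sSup (δ '' Icc (s - (⌈max (s - a) 0⌉ : ℝ)) (s + (⌈max (b - s) 0⌉ : ℝ) - 1)) := by
  set K := ⌈max (b - s) 0⌉₊
  set K' := ⌈max (s - a) 0⌉₊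
  have hK : ((⌈max (b - s) 0⌉ : ℤ) : ℝ) = K :=
    (natCast_ceil_eq_intCast_ceil (le_max_right _ _)).symm
  have hK' : ((⌈max (s - a) 0⌉ : ℤ) : ℝ) = K' :=
    (natCast_ceil_eq_intCast_ceil (le_max_right _ _)).symm
  push_cast
  rw [hK, hK']
  set S := sSup (δ '' Icc (s - K') (s + K - 1))
  have hεS : ∀ u ∈ Icc (s - K') (s + K - 1), ‖ε u‖ ≤ S := fun u hu =>
    (hεδ u).trans (le_csSup (isCompact_Icc.bddAbove_image hδ.continuousOn) (mem_image_of_mem δ hu))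
  have hsum : ∀ (L : ℕ) (f : ℕ → ℝ), (∀ k : ℕ, (k : ℝ) + 1 ≤ L → f k ≤ S) →
      ∑ k ∈ Finset.range L, f k ≤ L * S := fun L f h => by
    simpa using Finset.sum_le_card_nsmul (Finset.range L) f S fun k hk =>
      h k (by exact_mod_cast Finset.mem_range.1 hk)
  have := Nat.cast_nonneg (α := ℝ) K
  have := Nat.cast_nonneg (α := ℝ) K'
  calc ‖E s‖ ≤ _ := hE s K K' ((le_max_left _ _).trans (Nat.le_ceil _))
        ((le_max_left _ _).trans (Nat.le_ceil _))
    _ ≤ K * S + K' * S := add_le_add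
        (hsum K _ fun k hk => hεS _ ⟨by linarith [Nat.cast_nonneg (α := ℝ) k], by linarith⟩)
        (hsum K' _ fun k hk => hεS _ ⟨by linarith, by linarith [Nat.cast_nonneg (α := ℝ) k]⟩)
    _ = (K + K') * S := by ring

theorem ggs_difference_equation_C2r1_general
    (a b : ℝ) (hab : a < b) (M : ℕ → ℝ) (hM : StandingAssumptions M)
    (χ : ℝ → ℂ) (hχM : χ ∈ CarlemanClass M)
    (r : ℕ)
    (y : ℝ → ℂ) (hy : y ∈ CarlemanClass M)
    (δ : ℝ → ℝ) (hδC : ContDiff ℝ (2 * r + 1 : ℕ) δ)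
    (hyδ : ∀ s : ℝ, ‖y s - y (s + 1) - χ s‖ ≤ δ s) :
    ∃ z ∈ CarlemanClass M, (∀ s : ℝ, z s - z (s + 1) = χ s) ∧
      ∀ s : ℝ, ‖y s - z s‖ ≤
        ((⌈max (b - s) 0⌉ + ⌈max (s - a) 0⌉ : ℤ) : ℝ) *
          sSup (δ '' Set.Icc (s - (⌈max (s - a) 0⌉ : ℝ)) (s + (⌈max (b - s) 0⌉ : ℝ) - 1)) +
        (∑ j ∈ Finset.Icc 1 r,
          Bdieu j / (Nat.factorial (2 * j) : ℝ) *
            (((⌈max (b - s) 0⌉ + ⌈max (s - a) 0⌉ : ℤ) : ℝ) *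
              sSup ((fun u => |iteratedDeriv (2 * j) δ u|) ''
                Set.Icc (s - (⌈max (s - a) 0⌉ : ℝ)) (s + (⌈max (b - s) 0⌉ : ℝ) - 1)))) +
        ((r : ℝ) + 1 / 2) * Bdieu r / (Nat.factorial (2 * r + 1) : ℝ) *
          ((((⌈max (b - s) 0⌉ + ⌈max (s - a) 0⌉ : ℤ) : ℝ) - 1) *
            sSup ((fun u => |iteratedDeriv (2 * r + 1) δ u|) ''
              Set.Icc (s - (⌈max (s - a) 0⌉ : ℝ)) (s + (⌈max (b - s) 0⌉ : ℝ) - 1))) := by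
  have hM0 : ∀ n, 0 ≤ M n := fun n => (hM.1 n).le
  rw [mem_carlemanClass_iff] at hχM hy
  obtain ⟨E, hE, hEχ, hEle⟩ := exists_carleman_solution hM hab
    (ε := fun s => y s - y (s + 1) - χ s) ((hy.sub hM0 (hy.comp_add_const 1)).sub hM0 hχM)
  refine ⟨fun s => y s - E s, hy.sub hM0 hE, fun s => by linear_combination -hEχ s, fun s => ?_⟩
  have hN : (1 : ℝ) ≤ ((⌈max (b - s) 0⌉ + ⌈max (s - a) 0⌉ : ℤ) : ℝ) := by
    exact_mod_cast one_le_ceil_max_add_ceil_max hab s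
  have hsSup : ∀ n, 0 ≤ sSup ((fun u => |iteratedDeriv n δ u|) ''
      Icc (s - (⌈max (s - a) 0⌉ : ℝ)) (s + (⌈max (b - s) 0⌉ : ℝ) - 1)) :=
    fun n => Real.sSup_nonneg fun _ ⟨_, _, h⟩ => h ▸ abs_nonneg _
  rw [sub_sub_cancel]
  refine le_add_of_le_of_nonneg (le_add_of_le_of_nonneg
    (norm_le_ceil_mul_sSup hδC.continuous hyδ hEle s) (Finset.sum_nonneg fun j _ => ?_)) ?_
  · exact mul_nonneg (div_nonneg (abs_nonneg _) (Nat.cast_nonneg _))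
      (mul_nonneg (by linarith) (hsSup _))
  · exact mul_nonneg (div_nonneg (mul_nonneg (by positivity) (abs_nonneg _)) (Nat.cast_nonneg _))
      (mul_nonneg (by linarith) (hsSup _))

/-- Generalized Găvruța stability of the difference equation `f(s) - f(s+1) = χ(s)` with a
`C^{2r+1}` control function `δ`, with the improved Euler–Maclaurin error bound. -/
theorem ggs_difference_equation_C2r1
    (a b : ℝ) (hab : a < b) (M : ℕ → ℝ) (hM : StandingAssumptions M)
    (χ : ℝ → ℂ) (hχM : χ ∈ CarlemanClass M)
    (r : ℕ) (hr : 1 ≤ r)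
    (y : ℝ → ℂ) (hy : y ∈ CarlemanClass M)
    (δ : ℝ → ℝ) (hδ : ∀ s : ℝ, 0 ≤ δ s) (hδC : ContDiff ℝ (2 * r + 1 : ℕ) δ)
    (hyδ : ∀ s : ℝ, ‖y s - y (s + 1) - χ s‖ ≤ δ s) :
    ∃ z ∈ CarlemanClass M, (∀ s : ℝ, z s - z (s + 1) = χ s) ∧
      ∀ s : ℝ, ‖y s - z s‖ ≤
        ((⌈max (b - s) 0⌉ + ⌈max (s - a) 0⌉ : ℤ) : ℝ) *
          sSup (δ '' Set.Icc (s - (⌈max (s - a) 0⌉ : ℝ)) (s + (⌈max (b - s) 0⌉ : ℝ) - 1)) +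
        (∑ j ∈ Finset.Icc 1 r,
          Bdieu j / (Nat.factorial (2 * j) : ℝ) *
            (((⌈max (b - s) 0⌉ + ⌈max (s - a) 0⌉ : ℤ) : ℝ) *
              sSup ((fun u => |iteratedDeriv (2 * j) δ u|) ''
                Set.Icc (s - (⌈max (s - a) 0⌉ : ℝ)) (s + (⌈max (b - s) 0⌉ : ℝ) - 1)))) +
        ((r : ℝ) + 1 / 2) * Bdieu r / (Nat.factorial (2 * r + 1) : ℝ) *
          ((((⌈max (b - s) 0⌉ + ⌈max (s - a) 0⌉ : ℤ) : ℝ) - 1) *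
            sSup ((fun u => |iteratedDeriv (2 * r + 1) δ u|) ''
              Set.Icc (s - (⌈max (s - a) 0⌉ : ℝ)) (s + (⌈max (b - s) 0⌉ : ℝ) - 1))) :=
  ggs_difference_equation_C2r1_general a b hab M hM χ hχM r y hy δ hδC hyδ
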